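/- Let 0 ≤ s₁ ≤ s₂ < 1 and p > 0, 0 < q < 1 with p + q > 1. Then ∫_0^{2π} dθ / (|1 − s₁e^{iθ}|^p · |1 − s₂e^{iθ}|^q) ≍ 1/(1−s₁)^{p+q−1}, with comparison constants depending only on p and q. -/

import Mathlib

/-!
For `0 ≤ s ≤ 1` and `0 ≤ θ ≤ π`, `‖1 - s e^{iθ}‖` lies between `max (1 - s) (θ / π)` and
`(1 - s) + θ`. On `[0, 1 - s₁]` both norms are therefore at most `2 (1 - s₁)` (as `s₁ ≤ s₂`),
giving the lower bound. For the upper bound, the reflection `θ ↦ 2π - θ` reduces the integral to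
`[0, π]`, where the integrand is dominated by `π ^ (p + q) * max (π (1 - s₁)) θ ^ (-p) * θ ^ (-q)`;
split at `θ = π (1 - s₁)`, the piece near `0` is finite because `q < 1` and the other piece
because `p + q > 1`.
-/

open Real Complex ComplexConjugate MeasureTheory Set

lemma integral_zero_two_mul_eq_two_mul_of_symm {f : ℝ → ℝ} {a : ℝ}
    (hf : ∀ x, f (2 * a - x) = f x) (h₁ : IntervalIntegrable f volume 0 a)
    (h₂ : IntervalIntegrable f volume a (2 * a)) :
    ∫ x in 0..2 * a, f x = 2 * ∫ x in 0..a, f x := by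
  have hreflect := intervalIntegral.integral_comp_sub_left (a := 0) (b := a) f (2 * a)
  simp only [hf, sub_zero, show 2 * a - a = a by ring] at hreflect
  rw [← intervalIntegral.integral_add_adjacent_intervals h₁ h₂, ← hreflect, two_mul]

lemma integral_rpow_le_of_one_lt {r t b : ℝ} (hr : 1 < r) (ht : 0 < t) (htb : t ≤ b) :
    ∫ x in t..b, x ^ (-r) ≤ t ^ (1 - r) / (r - 1) := by
  have h0 : (0 : ℝ) ∉ uIcc t b := notMem_uIcc_of_lt ht (ht.trans_le htb)
  rw [integral_rpow (Or.inr ⟨by linarith, h0⟩), neg_add_eq_sub, ← neg_div_neg_eq, neg_sub,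
    neg_sub]
  have : 0 < r - 1 := by linarith
  gcongr
  exact sub_le_self _ (rpow_nonneg (ht.le.trans htb) _)

lemma integral_le_of_le_max_rpow_mul_rpow {g : ℝ → ℝ} {p q t b M : ℝ} (hM : 0 ≤ M)
    (ht : 0 < t) (htb : t ≤ b) (hq : q < 1) (hpq : 1 < p + q)
    (hg : IntervalIntegrable g volume 0 b)
    (hbound : ∀ x ∈ Ioo 0 b, g x ≤ M * (max t x ^ (-p) * x ^ (-q))) :
    ∫ x in 0..b, g x ≤ M * (1 / (1 - q) + 1 / (p + q - 1)) * t ^ (1 - (p + q)) := by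
  have htmem : t ∈ uIcc 0 b := mem_uIcc_of_le ht.le htb
  have hg₁ : IntervalIntegrable g volume 0 t := hg.mono_set (uIcc_subset_uIcc left_mem_uIcc htmem)
  have hg₂ : IntervalIntegrable g volume t b := hg.mono_set (uIcc_subset_uIcc htmem right_mem_uIcc)
  have hsmall : ∫ x in 0..t, g x ≤ M * t ^ (-p) * (t ^ (1 - q) / (1 - q)) := by
    have hint : IntervalIntegrable (fun x => M * t ^ (-p) * x ^ (-q)) volume 0 t :=
      (intervalIntegral.intervalIntegrable_rpow' (by linarith)).const_mul _
    refine (intervalIntegral.integral_mono_on_of_le_Ioo ht.le hg₁ hint fun x hx => ?_).trans_eq ?_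
    · have := hbound x ⟨hx.1, hx.2.trans_le htb⟩
      rwa [max_eq_left hx.2.le, ← mul_assoc] at this
    · rw [intervalIntegral.integral_const_mul, integral_rpow (Or.inl (by linarith)),
        zero_rpow (by linarith), sub_zero, neg_add_eq_sub]
  have hlarge : ∫ x in t..b, g x ≤ M * (t ^ (1 - (p + q)) / (p + q - 1)) := by
    have h0 : (0 : ℝ) ∉ uIcc t b := notMem_uIcc_of_lt ht (ht.trans_le htb)
    have hint : IntervalIntegrable (fun x => M * x ^ (-(p + q))) volume t b :=
      (intervalIntegral.intervalIntegrable_rpow (Or.inr h0)).const_mul _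
    refine (intervalIntegral.integral_mono_on_of_le_Ioo htb hg₂ hint fun x hx => ?_).trans ?_
    · have hx₀ : 0 < x := ht.trans hx.1
      have := hbound x ⟨hx₀, hx.2⟩
      rwa [max_eq_right hx.1.le, ← rpow_add hx₀, ← neg_add] at this
    · rw [intervalIntegral.integral_const_mul]
      exact mul_le_mul_of_nonneg_left (integral_rpow_le_of_one_lt hpq ht htb) hM
  have hexp : t ^ (-p) * t ^ (1 - q) = t ^ (1 - (p + q)) := by
    rw [← rpow_add ht]; ring_nf
  rw [← intervalIntegral.integral_add_adjacent_intervals hg₁ hg₂]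
  calc _ ≤ M * t ^ (-p) * (t ^ (1 - q) / (1 - q)) + M * (t ^ (1 - (p + q)) / (p + q - 1)) :=
        add_le_add hsmall hlarge
    _ = _ := by rw [mul_assoc M, mul_div_assoc', hexp]; ring

section NormOneSubMulExp

variable {s : ℝ} (θ : ℝ)

lemma one_sub_le_norm_one_sub_mul_exp (hs : 0 ≤ s) : 1 - s ≤ ‖1 - s * exp (θ * I)‖ := by
  simpa [abs_of_nonneg hs] using norm_sub_norm_le (1 : ℂ) (s * exp (θ * I))

lemma norm_one_sub_mul_exp_pos (hs₀ : 0 ≤ s) (hs₁ : s < 1) :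
    0 < ‖1 - s * exp (θ * I)‖ :=
  (sub_pos.2 hs₁).trans_le (one_sub_le_norm_one_sub_mul_exp θ hs₀)

lemma norm_one_sub_mul_exp_le (hs₀ : 0 ≤ s) (hs₁ : s ≤ 1) :
    ‖1 - s * exp (θ * I)‖ ≤ (1 - s) + |θ| := by
  have hexp : ‖exp (θ * I) - 1‖ ≤ |θ| := by
    simpa [mul_comm] using Real.norm_exp_I_mul_ofReal_sub_one_le (x := θ)
  calc ‖1 - s * exp (θ * I)‖ = ‖((1 - s : ℝ) : ℂ) - s * (exp (θ * I) - 1)‖ := by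
        congr 1; push_cast; ring
    _ ≤ (1 - s) + s * |θ| := by
        refine (norm_sub_le _ _).trans ?_
        rw [norm_mul, Complex.norm_real, Complex.norm_real, Real.norm_of_nonneg (by linarith),
          Real.norm_of_nonneg hs₀]
        gcongr
    _ ≤ (1 - s) + |θ| := by nlinarith [abs_nonneg θ]

lemma div_pi_le_norm_one_sub_mul_exp (hs₀ : 0 ≤ s) (hs₁ : s ≤ 1) (hθ₀ : 0 ≤ θ) (hθπ : θ ≤ π) :
    θ / π ≤ ‖1 - s * exp (θ * I)‖ := by
  have hsin : θ / π ≤ Real.sin (θ / 2) := by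
    have := Real.mul_le_sin (x := θ / 2) (by linarith) (by linarith)
    rwa [show 2 / π * (θ / 2) = θ / π by field_simp] at this
  have hchord : ‖1 - exp (θ * I)‖ = 2 * Real.sin (θ / 2) := by
    rw [← norm_neg, neg_sub, mul_comm, norm_exp_I_mul_ofReal_sub_one, Real.norm_of_nonneg]
    exact mul_nonneg two_pos.le (Real.sin_nonneg_of_nonneg_of_le_pi (by linarith) (by linarith))
  have htri : ‖1 - exp (θ * I)‖ ≤ ‖1 - s * exp (θ * I)‖ + (1 - s) := by
    calc ‖1 - exp (θ * I)‖ ≤ ‖1 - s * exp (θ * I)‖ + ‖s * exp (θ * I) - exp (θ * I)‖ :=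
          norm_sub_le_norm_sub_add_norm_sub _ _ _
      _ = ‖1 - s * exp (θ * I)‖ + (1 - s) := by
          rw [← sub_one_mul, norm_mul, norm_exp_ofReal_mul_I, mul_one,
            show (s : ℂ) - 1 = ((s - 1 : ℝ) : ℂ) by push_cast; ring, Complex.norm_real,
            Real.norm_of_nonpos (by linarith), neg_sub]
  linarith [one_sub_le_norm_one_sub_mul_exp θ hs₀]

lemma norm_one_sub_mul_exp_two_pi_sub :
    ‖1 - s * exp (((2 * π - θ : ℝ) : ℂ) * I)‖ = ‖1 - s * exp (θ * I)‖ := by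
  have : exp (((2 * π - θ : ℝ) : ℂ) * I) = conj (exp (θ * I)) := by
    rw [← exp_conj, map_mul, conj_ofReal, conj_I, mul_neg, ← exp_periodic.sub_eq']
    push_cast; ring_nf
  rw [this, ← norm_conj, map_sub, map_one, map_mul, conj_ofReal, conj_conj]

end NormOneSubMulExp

lemma continuous_one_div_norm_rpow_mul_norm_rpow {p q s₁ s₂ : ℝ} (hs₁ : 0 ≤ s₁) (hs₁' : s₁ < 1)
    (hs₂ : 0 ≤ s₂) (hs₂' : s₂ < 1) :
    Continuous fun θ : ℝ =>
      1 / (‖1 - s₁ * exp (θ * I)‖ ^ p * ‖1 - s₂ * exp (θ * I)‖ ^ q) := by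
  have hA {s : ℝ} : Continuous fun θ : ℝ => ‖1 - s * exp (θ * I)‖ := by fun_prop
  refine continuous_const.div ((hA.rpow_const fun θ => ?_).mul (hA.rpow_const fun θ => ?_))
    fun θ => ?_
  · exact Or.inl (norm_one_sub_mul_exp_pos θ hs₁ hs₁').ne'
  · exact Or.inl (norm_one_sub_mul_exp_pos θ hs₂ hs₂').ne'
  · have := norm_one_sub_mul_exp_pos θ hs₁ hs₁'
    have := norm_one_sub_mul_exp_pos θ hs₂ hs₂'
    positivity

lemma rpow_neg_le_one_div_norm_rpow_mul_norm_rpow {p q s₁ s₂ θ : ℝ} (hp : 0 ≤ p) (hq : 0 ≤ q)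
    (hs₁ : 0 ≤ s₁) (hs₁₂ : s₁ ≤ s₂) (hs₂ : s₂ < 1) (hθ₀ : 0 ≤ θ) (hθ : θ ≤ 1 - s₁) :
    (2 * (1 - s₁)) ^ (-(p + q)) ≤
      1 / (‖1 - s₁ * exp (θ * I)‖ ^ p * ‖1 - s₂ * exp (θ * I)‖ ^ q) := by
  have hA₁ := norm_one_sub_mul_exp_pos θ hs₁ (hs₁₂.trans_lt hs₂)
  have hA₂ := norm_one_sub_mul_exp_pos θ (hs₁.trans hs₁₂) hs₂
  have h₁ : ‖1 - s₁ * exp (θ * I)‖ ≤ 2 * (1 - s₁) := by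
    linarith [norm_one_sub_mul_exp_le θ hs₁ (by linarith), abs_of_nonneg hθ₀]
  have h₂ : ‖1 - s₂ * exp (θ * I)‖ ≤ 2 * (1 - s₁) := by
    linarith [norm_one_sub_mul_exp_le θ (hs₁.trans hs₁₂) hs₂.le, abs_of_nonneg hθ₀]
  have ht : 0 < 2 * (1 - s₁) := by linarith
  calc (2 * (1 - s₁)) ^ (-(p + q)) = 1 / ((2 * (1 - s₁)) ^ p * (2 * (1 - s₁)) ^ q) := by
        rw [← rpow_add ht, rpow_neg ht.le, one_div]
    _ ≤ _ := by gcongr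

lemma one_div_norm_rpow_mul_norm_rpow_le {p q s₁ s₂ θ : ℝ} (hp : 0 ≤ p) (hq : 0 ≤ q)
    (hs₁ : 0 ≤ s₁) (hs₁' : s₁ ≤ 1) (hs₂ : 0 ≤ s₂) (hs₂' : s₂ ≤ 1) (hθ₀ : 0 < θ) (hθ : θ ≤ π) :
    1 / (‖1 - s₁ * exp (θ * I)‖ ^ p * ‖1 - s₂ * exp (θ * I)‖ ^ q) ≤
      π ^ (p + q) * (max (π * (1 - s₁)) θ ^ (-p) * θ ^ (-q)) := by
  have h₁ : max (π * (1 - s₁)) θ / π ≤ ‖1 - s₁ * exp (θ * I)‖ := by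
    rw [← max_div_div_right pi_pos.le, mul_div_cancel_left₀ _ pi_ne_zero]
    exact max_le (one_sub_le_norm_one_sub_mul_exp θ hs₁)
      (div_pi_le_norm_one_sub_mul_exp θ hs₁ hs₁' hθ₀.le hθ)
  have h₂ := div_pi_le_norm_one_sub_mul_exp θ hs₂ hs₂' hθ₀.le hθ
  have hmax : 0 < max (π * (1 - s₁)) θ := lt_max_of_lt_right hθ₀
  calc _ ≤ 1 / ((max (π * (1 - s₁)) θ / π) ^ p * (θ / π) ^ q) := by gcongr
    _ = _ := by
      rw [div_rpow hmax.le pi_pos.le, div_rpow hθ₀.le pi_pos.le, rpow_neg hmax.le,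
        rpow_neg hθ₀.le, rpow_add pi_pos]
      field_simp

theorem stmt14 (p q : ℝ) (hp : 0 < p) (hq0 : 0 < q) (hq1 : q < 1) (hpq : 1 < p + q) :
    ∃ c C : ℝ, 0 < c ∧ 0 < C ∧ ∀ s₁ s₂ : ℝ, 0 ≤ s₁ → s₁ ≤ s₂ → s₂ < 1 →
      c * (1 / (1 - s₁) ^ (p + q - 1)) ≤
        (∫ θ in (0:ℝ)..(2 * π),
          1 / (‖1 - s₁ * Complex.exp (θ * Complex.I)‖ ^ p *
               ‖1 - s₂ * Complex.exp (θ * Complex.I)‖ ^ q)) ∧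
      (∫ θ in (0:ℝ)..(2 * π),
          1 / (‖1 - s₁ * Complex.exp (θ * Complex.I)‖ ^ p *
               ‖1 - s₂ * Complex.exp (θ * Complex.I)‖ ^ q)) ≤
        C * (1 / (1 - s₁) ^ (p + q - 1)) := by
  have hq : 0 < 1 - q := by linarith
  have hpq' : 0 < p + q - 1 := by linarith
  refine ⟨2 ^ (-(p + q)), 2 * π * (1 / (1 - q) + 1 / (p + q - 1)), by positivity, by positivity,
    fun s₁ s₂ hs₁ hs₁₂ hs₂ => ?_⟩
  have ht : 0 < 1 - s₁ := by linarith
  have hs₂₀ : 0 ≤ s₂ := hs₁.trans hs₁₂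
  set g := fun θ : ℝ => 1 / (‖1 - s₁ * exp (θ * I)‖ ^ p * ‖1 - s₂ * exp (θ * I)‖ ^ q)
  have hg : Continuous g := continuous_one_div_norm_rpow_mul_norm_rpow hs₁ (by linarith) hs₂₀ hs₂
  rw [one_div, ← rpow_neg ht.le, neg_sub]
  constructor
  · have hg₀ : ∀ θ, 0 ≤ g θ := fun θ => by
      have := norm_one_sub_mul_exp_pos θ hs₁ (by linarith)
      have := norm_one_sub_mul_exp_pos θ hs₂₀ hs₂
      positivity
    calc 2 ^ (-(p + q)) * (1 - s₁) ^ (1 - (p + q))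
        = ∫ _ in 0..1 - s₁, (2 * (1 - s₁)) ^ (-(p + q)) := by
          rw [intervalIntegral.integral_const, smul_eq_mul, sub_zero, mul_rpow two_pos.le ht.le,
            show 1 - (p + q) = 1 + -(p + q) by ring, rpow_one_add' ht.le (by linarith)]
          ring
      _ ≤ ∫ θ in 0..1 - s₁, g θ :=
          intervalIntegral.integral_mono_on ht.le intervalIntegrable_const
            (hg.intervalIntegrable _ _) fun θ hθ =>
              rpow_neg_le_one_div_norm_rpow_mul_norm_rpow hp.le hq0.le hs₁ hs₁₂ hs₂ hθ.1 hθ.2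
      _ ≤ ∫ θ in 0..2 * π, g θ :=
          intervalIntegral.integral_mono_interval le_rfl ht.le (by linarith [pi_gt_three])
            (Filter.Eventually.of_forall hg₀) (hg.intervalIntegrable _ _)
  · calc ∫ θ in 0..2 * π, g θ = 2 * ∫ θ in 0..π, g θ :=
          integral_zero_two_mul_eq_two_mul_of_symm
            (fun θ => by simp only [g, norm_one_sub_mul_exp_two_pi_sub])
            (hg.intervalIntegrable _ _) (hg.intervalIntegrable _ _)
      _ ≤ 2 * (π ^ (p + q) * (1 / (1 - q) + 1 / (p + q - 1)) *
            (π * (1 - s₁)) ^ (1 - (p + q))) := by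
          gcongr
          exact integral_le_of_le_max_rpow_mul_rpow (by positivity) (by positivity)
            (by nlinarith [pi_pos]) hq1 hpq (hg.intervalIntegrable _ _) fun θ hθ =>
              one_div_norm_rpow_mul_norm_rpow_le hp.le hq0.le hs₁ (by linarith) hs₂₀ hs₂.le
                hθ.1 hθ.2.le
      _ = _ := by
          have hπ : π ^ (p + q) * π ^ (1 - (p + q)) = π := by
            rw [← rpow_add pi_pos, add_sub_cancel, rpow_one]
          rw [mul_rpow pi_pos.le ht.le]
          linear_combination
            (2 * (1 / (1 - q) + 1 / (p + q - 1)) * (1 - s₁) ^ (1 - (p + q))) * hπ
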